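/- arXiv:2212.04743 — 2 statements merged into one kernel-verified Lean document; each statement's English description precedes it below -/
import Mathlib

section
/- Let Σ be a root system, α a root, and λ a root with α + λ ∈ Σ. Then the span of the set of brackets [X, Y] with X ∈ g_α and Y ∈ g_λ equals g_{α+λ}; i.e., in a real semisimple Lie algebra with restricted root space decomposition, [g_α, g_λ] = g_{α+λ} whenever α, λ, α+λ are all roots. -/
/-!
If `[g_α, g_λ]` were a proper subspace of `g_{α+λ}`, some `Z ≠ 0` in `g_{α+λ}` would be orthogonal
to it for `B(x, θ y)`. Invariance of the Killing form `B` and definiteness of `B(x, θ y)` then give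
`[θ X, Z] = 0` for every `X` in `g_α` or `g_λ`. For `X ≠ 0` in `g_μ`, `h = [X, θ X]` lies in `a`,
is a positive multiple of the `B`-dual of `-μ` on `a`, and spans an `sl₂` triple together with
`θ X` and `X`; since `Z` is primitive for it, `(α + λ)(h) ≥ 0`. Adding the two dual vectors gives
`P ∈ a` with `B(P, ·) = -(α + λ)` on `a` and `B(P, P) = -(α + λ)(P) ≤ 0`, so `P = 0` and `α + λ`
vanishes on `a`, contradicting that it is a root.
-/

/-- The restricted root space of a linear functional `l` relative to the
abelian subspace `a` of a real Lie algebra: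
`g_l = {X | [H, X] = l(H) • X for all H ∈ a}`. -/
def rootSpaceIn {g : Type*} [LieRing g] [LieAlgebra ℝ g] (a : Submodule ℝ g)
    (l : g →ₗ[ℝ] ℝ) : Submodule ℝ g where
  carrier := {X | ∀ H ∈ a, ⁅H, X⁆ = l H • X}
  add_mem' := by
    intro x y hx hy H hH
    simp only [Set.mem_setOf_eq] at hx hy
    rw [lie_add, hx H hH, hy H hH, smul_add]
  zero_mem' := by intro H hH; simp
  smul_mem' := by
    intro c x hx H hH
    simp only [Set.mem_setOf_eq] at hx
    rw [lie_smul, hx H hH, smul_comm]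

theorem Submodule.exists_mem_ne_zero_forall_eq_zero_of_lt {K M : Type*} [Field K]
    [AddCommGroup M] [Module K M] [FiniteDimensional K M] (B : M →ₗ[K] M →ₗ[K] K)
    {S V : Submodule K M} (hSV : S < V) : ∃ z ∈ V, z ≠ 0 ∧ ∀ s ∈ S, B s z = 0 := by
  let φ : V →ₗ[K] Module.Dual K S := LinearMap.domRestrict' S ∘ₗ B.flip ∘ₗ V.subtype
  have hker : LinearMap.ker φ ≠ ⊥ := LinearMap.ker_ne_bot_of_finrank_lt <| by
    rw [Subspace.dual_finrank_eq]
    exact Submodule.finrank_lt_finrank_of_lt hSV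
  obtain ⟨z, hz, hz0⟩ := Submodule.exists_mem_ne_zero_of_ne_bot hker
  refine ⟨z, z.2, by simpa using hz0, fun s hs => ?_⟩
  simpa [φ] using LinearMap.congr_fun hz ⟨s, hs⟩

theorem nonneg_of_lie_eq_smul_of_lie_eq_zero {K L : Type*} [Field K] [LinearOrder K]
    [IsStrictOrderedRing K] [LieRing L] [LieAlgebra K L] [FiniteDimensional K L]
    {h e f z : L} {t c : K} (ht : 0 < t) (hh : h ≠ 0) (hef : ⁅e, f⁆ = h)
    (hhe : ⁅h, e⁆ = t • e) (hhf : ⁅h, f⁆ = -(t • f))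
    (hz : z ≠ 0) (hhz : ⁅h, z⁆ = c • z) (hez : ⁅e, z⁆ = 0) : 0 ≤ c := by
  have htriple : IsSl2Triple ((2 / t) • h) e ((2 / t) • f) := by
    refine ⟨smul_ne_zero (by positivity) hh, by rw [lie_smul, hef], ?_, ?_⟩
    · rw [smul_lie, hhe, smul_smul, div_mul_cancel₀ _ ht.ne', two_smul, two_nsmul]
    · rw [smul_lie, lie_smul, hhf, smul_smul, smul_neg, smul_smul, mul_assoc,
        div_mul_cancel₀ _ ht.ne', mul_comm, ← smul_smul, two_smul, two_nsmul]
  obtain ⟨n, hn⟩ := (⟨hz, by rw [smul_lie, hhz, smul_smul], hez⟩ :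
    htriple.HasPrimitiveVectorWith z (2 / t * c)).exists_nat
  have : 0 ≤ 2 / t * c := hn ▸ n.cast_nonneg
  exact nonneg_of_mul_nonneg_right this (by positivity)

section RestrictedRoots

variable {g : Type*} [LieRing g] [LieAlgebra ℝ g] {θ : g →ₗ⁅ℝ⁆ g} {a : Submodule ℝ g}
  {μ ν : g →ₗ[ℝ] ℝ}

theorem lie_mem_rootSpaceIn {x y : g} (hx : x ∈ rootSpaceIn a μ) (hy : y ∈ rootSpaceIn a ν) :
    ⁅x, y⁆ ∈ rootSpaceIn a (μ + ν) := fun H hH => by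
  rw [leibniz_lie, hx H hH, hy H hH, smul_lie, lie_smul, LinearMap.add_apply, add_smul]

theorem map_mem_rootSpaceIn_neg (hθa : ∀ H ∈ a, θ H = -H) {X : g}
    (hX : X ∈ rootSpaceIn a μ) : θ X ∈ rootSpaceIn a (-μ) := fun H hH => by
  have hθH : θ (-H) = H := by rw [map_neg, hθa H hH, neg_neg]
  rw [← hθH, ← θ.map_lie, hX (-H) (neg_mem hH), map_smul, hθH, map_neg, LinearMap.neg_apply]

theorem lie_map_mem (hθ2 : ∀ x, θ (θ x) = x) (hθa : ∀ H ∈ a, θ H = -H)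
    (hamax : ∀ x : g, θ x = -x → (∀ H ∈ a, ⁅H, x⁆ = (0 : g)) → x ∈ a)
    {X : g} (hX : X ∈ rootSpaceIn a μ) : ⁅X, θ X⁆ ∈ a := by
  apply hamax
  · rw [θ.map_lie, hθ2, ← lie_skew]
  · intro H hH
    rw [leibniz_lie, hX H hH, map_mem_rootSpaceIn_neg hθa hX H hH, smul_lie, lie_smul,
      LinearMap.neg_apply, neg_smul, add_neg_cancel]

theorem killingForm_lie_map_apply (hθa : ∀ H ∈ a, θ H = -H) {X H : g}
    (hX : X ∈ rootSpaceIn a μ) (hH : H ∈ a) :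
    killingForm ℝ g ⁅X, θ X⁆ H = μ H * killingForm ℝ g X (θ X) := by
  have hθX : ⁅θ X, H⁆ = μ H • θ X := by
    rw [← lie_skew, map_mem_rootSpaceIn_neg hθa hX H hH, LinearMap.neg_apply, neg_smul, neg_neg]
  rw [LieModule.traceForm_apply_lie_apply, hθX, map_smul, smul_eq_mul]

theorem killingForm_self_pos_of_mem
    (hθpos : ∀ x : g, x ≠ 0 → 0 < -(killingForm ℝ g x (θ x)))
    (hθa : ∀ H ∈ a, θ H = -H) {H : g} (hH : H ∈ a) (hH0 : H ≠ 0) :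
    0 < killingForm ℝ g H H := by
  simpa [hθa H hH] using hθpos H hH0

theorem apply_lie_map_neg (hθ2 : ∀ x, θ (θ x) = x)
    (hθpos : ∀ x : g, x ≠ 0 → 0 < -(killingForm ℝ g x (θ x)))
    (hθa : ∀ H ∈ a, θ H = -H)
    (hamax : ∀ x : g, θ x = -x → (∀ H ∈ a, ⁅H, x⁆ = (0 : g)) → x ∈ a)
    {X : g} (hX : X ∈ rootSpaceIn a μ) (hh0 : ⁅X, θ X⁆ ≠ 0) : μ ⁅X, θ X⁆ < 0 := by
  have hmem := lie_map_mem hθ2 hθa hamax hX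
  have hX0 : X ≠ 0 := by rintro rfl; simp at hh0
  have hpos := killingForm_self_pos_of_mem hθpos hθa hmem hh0
  rw [killingForm_lie_map_apply hθa hX hmem] at hpos
  exact neg_of_mul_pos_left hpos (neg_pos.1 (hθpos X hX0)).le

theorem apply_lie_map_nonneg [FiniteDimensional ℝ g] (hθ2 : ∀ x, θ (θ x) = x)
    (hθpos : ∀ x : g, x ≠ 0 → 0 < -(killingForm ℝ g x (θ x)))
    (hθa : ∀ H ∈ a, θ H = -H)
    (hamax : ∀ x : g, θ x = -x → (∀ H ∈ a, ⁅H, x⁆ = (0 : g)) → x ∈ a)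
    {X Z : g} (hX : X ∈ rootSpaceIn a μ) (hZ : Z ∈ rootSpaceIn a ν) (hZ0 : Z ≠ 0)
    (hXZ : ⁅θ X, Z⁆ = 0) : 0 ≤ ν ⁅X, θ X⁆ := by
  by_cases hh0 : ⁅X, θ X⁆ = 0
  · rw [hh0, map_zero]
  have hmem := lie_map_mem hθ2 hθa hamax hX
  -- `(⁅X, θ X⁆, θ X, -X)` is an `sl₂` triple up to scaling, and `Z` is killed by `θ X`
  refine nonneg_of_lie_eq_smul_of_lie_eq_zero (e := θ X) (f := -X)
    (neg_pos.2 (apply_lie_map_neg hθ2 hθpos hθa hamax hX hh0)) hh0 (by rw [lie_neg, lie_skew])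
    ?_ ?_ hZ0 (hZ _ hmem) hXZ
  · rw [map_mem_rootSpaceIn_neg hθa hX _ hmem, LinearMap.neg_apply]
  · rw [lie_neg, hX _ hmem, neg_smul_neg]

theorem exists_mem_killingForm_eq_neg_apply_and_nonneg [FiniteDimensional ℝ g]
    (hθ2 : ∀ x, θ (θ x) = x)
    (hθpos : ∀ x : g, x ≠ 0 → 0 < -(killingForm ℝ g x (θ x)))
    (hθa : ∀ H ∈ a, θ H = -H)
    (hamax : ∀ x : g, θ x = -x → (∀ H ∈ a, ⁅H, x⁆ = (0 : g)) → x ∈ a)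
    {X Z : g} (hX : X ∈ rootSpaceIn a μ) (hX0 : X ≠ 0) (hZ : Z ∈ rootSpaceIn a ν)
    (hZ0 : Z ≠ 0) (hXZ : ⁅θ X, Z⁆ = 0) :
    ∃ p ∈ a, (∀ H ∈ a, killingForm ℝ g p H = -μ H) ∧ 0 ≤ ν p := by
  have hc := hθpos X hX0
  refine ⟨(-killingForm ℝ g X (θ X))⁻¹ • ⁅X, θ X⁆,
    a.smul_mem _ (lie_map_mem hθ2 hθa hamax hX), fun H hH => ?_, ?_⟩
  · rw [map_smul, LinearMap.smul_apply, killingForm_lie_map_apply hθa hX hH, smul_eq_mul]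
    field_simp [(neg_pos.1 hc).ne]
  · rw [map_smul, smul_eq_mul]
    exact mul_nonneg (inv_nonneg.2 hc.le)
      (apply_lie_map_nonneg hθ2 hθpos hθa hamax hX hZ hZ0 hXZ)

theorem apply_eq_zero_of_killingForm_eq_neg_apply
    (hθpos : ∀ x : g, x ≠ 0 → 0 < -(killingForm ℝ g x (θ x)))
    (hθa : ∀ H ∈ a, θ H = -H) {P : g} (hP : P ∈ a)
    (hPν : ∀ H ∈ a, killingForm ℝ g P H = -ν H) (hνP : 0 ≤ ν P) {H : g} (hH : H ∈ a) :
    ν H = 0 := by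
  have hP0 : P = 0 := by
    by_contra hP0
    have := killingForm_self_pos_of_mem hθpos hθa hP hP0
    linarith [hPν P hP]
  simpa [hP0] using hPν H hH

theorem lie_map_eq_zero_of_killingForm_eq_zero (hθ2 : ∀ x, θ (θ x) = x)
    (hθpos : ∀ x : g, x ≠ 0 → 0 < -(killingForm ℝ g x (θ x))) {X Z : g}
    (h : killingForm ℝ g ⁅X, ⁅θ X, Z⁆⁆ (θ Z) = 0) : ⁅θ X, Z⁆ = 0 := by
  have hθW : θ ⁅θ X, Z⁆ = ⁅X, θ Z⁆ := by rw [θ.map_lie, hθ2]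
  rw [LieModule.traceForm_apply_lie_apply', ← hθW] at h
  by_contra hW0
  exact (hθpos _ hW0).ne' h

theorem eq_zero_of_forall_killingForm_lie_map_eq_zero [FiniteDimensional ℝ g]
    (hθ2 : ∀ x, θ (θ x) = x)
    (hθpos : ∀ x : g, x ≠ 0 → 0 < -(killingForm ℝ g x (θ x)))
    (hθa : ∀ H ∈ a, θ H = -H)
    (hamax : ∀ x : g, θ x = -x → (∀ H ∈ a, ⁅H, x⁆ = (0 : g)) → x ∈ a)
    (hμ : rootSpaceIn a μ ≠ ⊥) (hν : rootSpaceIn a ν ≠ ⊥) (hμν : ∃ H ∈ a, (μ + ν) H ≠ 0)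
    {Z : g} (hZ : Z ∈ rootSpaceIn a (μ + ν))
    (horth : ∀ x ∈ rootSpaceIn a μ, ∀ y ∈ rootSpaceIn a ν, killingForm ℝ g ⁅x, y⁆ (θ Z) = 0) :
    Z = 0 := by
  by_contra hZ0
  obtain ⟨X, hX, hX0⟩ := Submodule.exists_mem_ne_zero_of_ne_bot hμ
  obtain ⟨Y, hY, hY0⟩ := Submodule.exists_mem_ne_zero_of_ne_bot hν
  have hXZ : ⁅θ X, Z⁆ = 0 := by
    have hW : ⁅θ X, Z⁆ ∈ rootSpaceIn a ν := by
      simpa using lie_mem_rootSpaceIn (map_mem_rootSpaceIn_neg hθa hX) hZ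
    exact lie_map_eq_zero_of_killingForm_eq_zero hθ2 hθpos (horth X hX _ hW)
  have hYZ : ⁅θ Y, Z⁆ = 0 := by
    have hW : ⁅θ Y, Z⁆ ∈ rootSpaceIn a μ := by
      simpa [add_comm μ ν] using lie_mem_rootSpaceIn (map_mem_rootSpaceIn_neg hθa hY) hZ
    refine lie_map_eq_zero_of_killingForm_eq_zero hθ2 hθpos ?_
    rw [← lie_skew, map_neg, LinearMap.neg_apply, horth _ hW Y hY, neg_zero]
  obtain ⟨p, hp, hpμ, hpν⟩ :=
    exists_mem_killingForm_eq_neg_apply_and_nonneg hθ2 hθpos hθa hamax hX hX0 hZ hZ0 hXZ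
  obtain ⟨q, hq, hqν, hqν'⟩ :=
    exists_mem_killingForm_eq_neg_apply_and_nonneg hθ2 hθpos hθa hamax hY hY0 hZ hZ0 hYZ
  obtain ⟨H, hH, hne⟩ := hμν
  refine hne (apply_eq_zero_of_killingForm_eq_neg_apply hθpos hθa (a.add_mem hp hq)
    (fun H hH => ?_) ?_ hH)
  · rw [map_add, LinearMap.add_apply, hpμ H hH, hqν H hH, LinearMap.add_apply, neg_add]
  · rw [map_add]
    exact add_nonneg hpν hqν'

end RestrictedRoots

theorem stmt0_general {g : Type*} [LieRing g] [LieAlgebra ℝ g] [FiniteDimensional ℝ g]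
    (θ : g →ₗ⁅ℝ⁆ g) (hθ2 : ∀ x, θ (θ x) = x)
    (hθpos : ∀ x : g, x ≠ 0 → 0 < -(killingForm ℝ g x (θ x)))
    (a : Submodule ℝ g)
    (haθ : ∀ H ∈ a, θ H = -H)
    (hamax : ∀ x : g, θ x = -x → (∀ H ∈ a, ⁅H, x⁆ = (0 : g)) → x ∈ a)
    (α lam : g →ₗ[ℝ] ℝ)
    (hα : (∃ H ∈ a, α H ≠ 0) ∧ rootSpaceIn a α ≠ ⊥)
    (hlam : (∃ H ∈ a, lam H ≠ 0) ∧ rootSpaceIn a lam ≠ ⊥)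
    (hsum : (∃ H ∈ a, (α + lam) H ≠ 0) ∧ rootSpaceIn a (α + lam) ≠ ⊥) :
    Submodule.span ℝ
        {z : g | ∃ x ∈ rootSpaceIn a α, ∃ y ∈ rootSpaceIn a lam, z = ⁅x, y⁆}
      = rootSpaceIn a (α + lam) := by
  have hle : Submodule.span ℝ
      {z : g | ∃ x ∈ rootSpaceIn a α, ∃ y ∈ rootSpaceIn a lam, z = ⁅x, y⁆}
        ≤ rootSpaceIn a (α + lam) := by
    rw [Submodule.span_le]
    rintro _ ⟨x, hx, y, hy, rfl⟩
    exact lie_mem_rootSpaceIn hx hy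
  by_contra hne
  obtain ⟨Z, hZ, hZ0, horth⟩ := Submodule.exists_mem_ne_zero_forall_eq_zero_of_lt
    ((killingForm ℝ g).compl₂ θ.toLinearMap) (hle.lt_of_ne hne)
  exact hZ0 <| eq_zero_of_forall_killingForm_lie_map_eq_zero hθ2 hθpos haθ hamax hα.2 hlam.2
    hsum.1 hZ fun x hx y hy => horth _ (Submodule.subset_span ⟨x, hx, y, hy, rfl⟩)

/-- In a real semisimple Lie algebra with Cartan involution `θ`
(so that `B_θ(x, y) = -B(x, θ y)` is positive definite), maximal abelian
subspace `a` of `p`, and restricted root space decomposition, one has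
`[g_α, g_λ] = g_{α+λ}` whenever `α`, `λ` and `α + λ` are all restricted roots:
the span of the brackets `[X, Y]`, `X ∈ g_α`, `Y ∈ g_λ`, is all of `g_{α+λ}`. -/
theorem stmt0 {g : Type*} [LieRing g] [LieAlgebra ℝ g] [FiniteDimensional ℝ g]
    [LieAlgebra.IsSemisimple ℝ g]
    (θ : g →ₗ⁅ℝ⁆ g) (hθ2 : ∀ x, θ (θ x) = x)
    (hθpos : ∀ x : g, x ≠ 0 → 0 < -(killingForm ℝ g x (θ x)))
    (a : Submodule ℝ g)
    (haθ : ∀ H ∈ a, θ H = -H)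
    (haab : ∀ H ∈ a, ∀ H' ∈ a, ⁅H, H'⁆ = (0 : g))
    (hamax : ∀ x : g, θ x = -x → (∀ H ∈ a, ⁅H, x⁆ = (0 : g)) → x ∈ a)
    (α lam : g →ₗ[ℝ] ℝ)
    (hα : (∃ H ∈ a, α H ≠ 0) ∧ rootSpaceIn a α ≠ ⊥)
    (hlam : (∃ H ∈ a, lam H ≠ 0) ∧ rootSpaceIn a lam ≠ ⊥)
    (hsum : (∃ H ∈ a, (α + lam) H ≠ 0) ∧ rootSpaceIn a (α + lam) ≠ ⊥) :
    Submodule.span ℝ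
        {z : g | ∃ x ∈ rootSpaceIn a α, ∃ y ∈ rootSpaceIn a lam, z = ⁅x, y⁆}
      = rootSpaceIn a (α + lam) :=
  stmt0_general θ hθ2 hθpos a haθ hamax α lam hα hlam hsum
end

section
/- Let α, λ ∈ Σ⁺ be distinct positive restricted roots with λ − α not a root, and let X_α ∈ g_α, X_λ ∈ g_λ. Then [[X_α, X_λ], θX_λ] = |α|² A_{α,λ} ⟨X_λ, X_λ⟩ X_α, where ⟨·,·⟩ is the metric inner product on n (equal to half the B_θ inner product). -/
/-- The metric inner product on `n`: one half of the inner product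
`⟨x, y⟩_{B_θ} = -B(x, θ y)`. -/
noncomputable def mI {g : Type*} [LieRing g] [LieAlgebra ℝ g]
    (θ : g →ₗ⁅ℝ⁆ g) (x y : g) : ℝ :=
  (1 / 2) * (-(killingForm ℝ g x (θ y)))

/-- The Cartan integer `A_{α,λ} = 2⟨α,λ⟩/|α|²`, expressed through the vectors
`H_α`, `H_λ` (on `a` the `B_θ` inner product coincides with the Killing form`). -/
noncomputable def cartanInt {g : Type*} [LieRing g] [LieAlgebra ℝ g]
    (Ha Hl : g) : ℝ :=
  2 * killingForm ℝ g Ha Hl / killingForm ℝ g Ha Ha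

/-! Since `λ - α` is not a root, `[X_α, θ X_λ] = 0`, so the Jacobi identity reduces the bracket to
`[X_α, [X_λ, θ X_λ]]`. The element `[X_λ, θ X_λ]` lies in `g_0` and is `θ`-anti-invariant, hence in `a`;
invariance of the Killing form shows it pairs with `a` like `B(X_λ, θ X_λ) H_λ`, and `B_θ` is definite,
so `[X_λ, θ X_λ] = B(X_λ, θ X_λ) H_λ`. Then `[X_α, H_λ] = -α(H_λ) X_α = -B(H_α, H_λ) X_α`. -/

section RootSpace

variable {g : Type*} [LieRing g] [LieAlgebra ℝ g] {a : Submodule ℝ g}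

lemma lie_mem_rootSpaceIn_add {l m : g →ₗ[ℝ] ℝ} {x y : g} (hx : x ∈ rootSpaceIn a l)
    (hy : y ∈ rootSpaceIn a m) : ⁅x, y⁆ ∈ rootSpaceIn a (l + m) := by
  intro H hH
  rw [leibniz_lie, hx H hH, hy H hH, smul_lie, lie_smul, LinearMap.add_apply, add_smul]

lemma lie_eq_zero_of_mem_rootSpaceIn_zero {x H : g} (hx : x ∈ rootSpaceIn a 0) (hH : H ∈ a) :
    ⁅H, x⁆ = 0 := by
  simpa using hx H hH

lemma rootSpaceIn_eq_bot {Sp : Finset (g →ₗ[ℝ] ℝ)}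
    (hroots : ∀ l : g →ₗ[ℝ] ℝ,
      ((∃ H ∈ a, l H ≠ 0) ∧ rootSpaceIn a l ≠ ⊥) ↔ (l ∈ Sp ∨ -l ∈ Sp))
    {l : g →ₗ[ℝ] ℝ} (hl : ∃ H ∈ a, l H ≠ 0) (hpos : l ∉ Sp) (hneg : -l ∉ Sp) :
    rootSpaceIn a l = ⊥ := by
  by_contra hbot
  rcases (hroots l).mp ⟨hl, hbot⟩ with h | h
  exacts [hpos h, hneg h]

variable {θ : g →ₗ⁅ℝ⁆ g}

lemma map_mem_rootSpaceIn_neg_s19 (haθ : ∀ H ∈ a, θ H = -H) {l : g →ₗ[ℝ] ℝ} {x : g}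
    (hx : x ∈ rootSpaceIn a l) : θ x ∈ rootSpaceIn a (-l) := by
  intro H hH
  calc ⁅H, θ x⁆ = -⁅θ H, θ x⁆ := by rw [haθ H hH, neg_lie, neg_neg]
    _ = -l H • θ x := by
      rw [← LieHom.map_lie, hx H hH, map_smul, neg_smul]

lemma killingForm_self_pos (hθpos : ∀ x : g, x ≠ 0 → 0 < -(killingForm ℝ g x (θ x)))
    {x : g} (hθx : θ x = -x) (hx : x ≠ 0) : 0 < killingForm ℝ g x x := by
  simpa [hθx] using hθpos x hx

lemma eq_of_killingForm_eq (hθpos : ∀ x : g, x ≠ 0 → 0 < -(killingForm ℝ g x (θ x)))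
    (haθ : ∀ H ∈ a, θ H = -H) {x y : g} (hx : x ∈ a) (hy : y ∈ a)
    (hxy : ∀ H ∈ a, killingForm ℝ g H x = killingForm ℝ g H y) : x = y := by
  by_contra hne
  have hpos := killingForm_self_pos hθpos (haθ _ (a.sub_mem hx hy)) (sub_ne_zero.mpr hne)
  rw [map_sub, hxy _ (a.sub_mem hx hy), sub_self] at hpos
  exact hpos.false

lemma lie_map_self_mem (hθ2 : ∀ x, θ (θ x) = x) (haθ : ∀ H ∈ a, θ H = -H)
    (hamax : ∀ x : g, θ x = -x → (∀ H ∈ a, ⁅H, x⁆ = (0 : g)) → x ∈ a)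
    {l : g →ₗ[ℝ] ℝ} {x : g} (hx : x ∈ rootSpaceIn a l) : ⁅x, θ x⁆ ∈ a := by
  have h0 : ⁅x, θ x⁆ ∈ rootSpaceIn a 0 := by
    simpa using lie_mem_rootSpaceIn_add hx (map_mem_rootSpaceIn_neg_s19 haθ hx)
  refine hamax _ ?_ fun H hH ↦ lie_eq_zero_of_mem_rootSpaceIn_zero h0 hH
  rw [LieHom.map_lie, hθ2, ← lie_skew]

lemma killingForm_lie_map_self {l : g →ₗ[ℝ] ℝ} {x H : g} (hx : x ∈ rootSpaceIn a l)
    (hH : H ∈ a) : killingForm ℝ g H ⁅x, θ x⁆ = l H * killingForm ℝ g x (θ x) := by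
  rw [← LieModule.traceForm_apply_lie_apply, hx H hH, map_smul, LinearMap.smul_apply,
    smul_eq_mul]

lemma lie_map_self_eq_smul (hθ2 : ∀ x, θ (θ x) = x)
    (hθpos : ∀ x : g, x ≠ 0 → 0 < -(killingForm ℝ g x (θ x))) (haθ : ∀ H ∈ a, θ H = -H)
    (hamax : ∀ x : g, θ x = -x → (∀ H ∈ a, ⁅H, x⁆ = (0 : g)) → x ∈ a)
    {l : g →ₗ[ℝ] ℝ} {Hl : g} (hHl : Hl ∈ a ∧ ∀ H ∈ a, killingForm ℝ g Hl H = l H)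
    {x : g} (hx : x ∈ rootSpaceIn a l) : ⁅x, θ x⁆ = killingForm ℝ g x (θ x) • Hl := by
  refine eq_of_killingForm_eq hθpos haθ (lie_map_self_mem hθ2 haθ hamax hx)
    (a.smul_mem _ hHl.1) fun H hH ↦ ?_
  rw [killingForm_lie_map_self hx hH, map_smul, smul_eq_mul, LieModule.traceForm_comm _ _ _ H,
    hHl.2 H hH, mul_comm]

end RootSpace

theorem stmt19_general {g : Type*} [LieRing g] [LieAlgebra ℝ g]
    (θ : g →ₗ⁅ℝ⁆ g) (hθ2 : ∀ x, θ (θ x) = x)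
    (hθpos : ∀ x : g, x ≠ 0 → 0 < -(killingForm ℝ g x (θ x)))
    (a : Submodule ℝ g)
    (haθ : ∀ H ∈ a, θ H = -H)
    (hamax : ∀ x : g, θ x = -x → (∀ H ∈ a, ⁅H, x⁆ = (0 : g)) → x ∈ a)
    -- the set of positive restricted roots
    (Sp : Finset (g →ₗ[ℝ] ℝ))
    (hroots : ∀ l : g →ₗ[ℝ] ℝ,
      ((∃ H ∈ a, l H ≠ 0) ∧ rootSpaceIn a l ≠ ⊥) ↔ (l ∈ Sp ∨ -l ∈ Sp))
    (α lam : g →ₗ[ℝ] ℝ) (hαSp : α ∈ Sp)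
    -- `α` and `λ` are distinct (as restricted roots, i.e. on `a`)
    (hne : ∃ H ∈ a, α H ≠ lam H)
    -- `λ - α` is not a root
    (hnr : lam - α ∉ Sp ∧ α - lam ∉ Sp)
    -- the vectors `H_α`, `H_λ` representing the roots via the Killing form
    (Ha : g) (hHa : Ha ∈ a ∧ ∀ H ∈ a, killingForm ℝ g Ha H = α H)
    (Hl : g) (hHl : Hl ∈ a ∧ ∀ H ∈ a, killingForm ℝ g Hl H = lam H)
    (Xa : g) (hXa : Xa ∈ rootSpaceIn a α)
    (Xl : g) (hXl : Xl ∈ rootSpaceIn a lam) :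
    ⁅⁅Xa, Xl⁆, θ Xl⁆
      = (killingForm ℝ g Ha Ha * cartanInt Ha Hl * mI θ Xl Xl) • Xa := by
  obtain ⟨hHa_mem, hHa⟩ := hHa
  have hXaθXl : ⁅Xa, θ Xl⁆ = 0 := by
    have hbot : rootSpaceIn a (α - lam) = ⊥ := by
      obtain ⟨H, hH, hαH⟩ := hne
      exact rootSpaceIn_eq_bot hroots ⟨H, hH, by simpa [sub_eq_zero] using hαH⟩ hnr.2
        (by rw [neg_sub]; exact hnr.1)
    have hmem := lie_mem_rootSpaceIn_add hXa (map_mem_rootSpaceIn_neg_s19 haθ hXl)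
    rwa [← sub_eq_add_neg, hbot, Submodule.mem_bot] at hmem
  have hHaHa : killingForm ℝ g Ha Ha ≠ 0 := by
    obtain ⟨⟨H, hH, hαH⟩, -⟩ := (hroots α).mpr (Or.inl hαSp)
    have hHa0 : Ha ≠ 0 := by rintro rfl; simp [← hHa H hH] at hαH
    exact (killingForm_self_pos hθpos (haθ Ha hHa_mem) hHa0).ne'
  have hLHS : ⁅⁅Xa, Xl⁆, θ Xl⁆
      = -(killingForm ℝ g Xl (θ Xl) * killingForm ℝ g Ha Hl) • Xa := by
    rw [lie_lie, hXaθXl, lie_zero, sub_zero,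
      lie_map_self_eq_smul hθ2 hθpos haθ hamax hHl hXl, lie_smul, ← lie_skew,
      hXa Hl hHl.1, hHa Hl hHl.1, smul_neg, smul_smul, neg_smul]
  rw [hLHS, cartanInt, mI]
  congr 1
  field_simp

/-- Let `α, λ` be distinct positive restricted roots such that
`λ - α` is not a root.  Then for any `X_α ∈ g_α` and `X_λ ∈ g_λ`,
`[[X_α, X_λ], θ X_λ] = |α|² A_{α,λ} ⟨X_λ, X_λ⟩ X_α`, where `⟨·,·⟩` is the metric
inner product on `n` (half of the `B_θ` inner product). -/
theorem stmt19 {g : Type*} [LieRing g] [LieAlgebra ℝ g] [FiniteDimensional ℝ g]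
    [LieAlgebra.IsSemisimple ℝ g]
    (θ : g →ₗ⁅ℝ⁆ g) (hθ2 : ∀ x, θ (θ x) = x)
    (hθpos : ∀ x : g, x ≠ 0 → 0 < -(killingForm ℝ g x (θ x)))
    (a : Submodule ℝ g)
    (haθ : ∀ H ∈ a, θ H = -H)
    (haab : ∀ H ∈ a, ∀ H' ∈ a, ⁅H, H'⁆ = (0 : g))
    (hamax : ∀ x : g, θ x = -x → (∀ H ∈ a, ⁅H, x⁆ = (0 : g)) → x ∈ a)
    -- the set of positive restricted roots
    (Sp : Finset (g →ₗ[ℝ] ℝ))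
    (hroots : ∀ l : g →ₗ[ℝ] ℝ,
      ((∃ H ∈ a, l H ≠ 0) ∧ rootSpaceIn a l ≠ ⊥) ↔ (l ∈ Sp ∨ -l ∈ Sp))
    (α lam : g →ₗ[ℝ] ℝ) (hαSp : α ∈ Sp) (hlamSp : lam ∈ Sp)
    -- `α` and `λ` are distinct (as restricted roots, i.e. on `a`)
    (hne : ∃ H ∈ a, α H ≠ lam H)
    -- `λ - α` is not a root
    (hnr : lam - α ∉ Sp ∧ α - lam ∉ Sp)
    -- the vectors `H_α`, `H_λ` representing the roots via the Killing form
    (Ha : g) (hHa : Ha ∈ a ∧ ∀ H ∈ a, killingForm ℝ g Ha H = α H)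
    (Hl : g) (hHl : Hl ∈ a ∧ ∀ H ∈ a, killingForm ℝ g Hl H = lam H)
    (Xa : g) (hXa : Xa ∈ rootSpaceIn a α)
    (Xl : g) (hXl : Xl ∈ rootSpaceIn a lam) :
    ⁅⁅Xa, Xl⁆, θ Xl⁆
      = (killingForm ℝ g Ha Ha * cartanInt Ha Hl * mI θ Xl Xl) • Xa :=
  stmt19_general θ hθ2 hθpos a haθ hamax Sp hroots α lam hαSp hne hnr Ha hHa Hl hHl Xa hXa Xl hXl
end
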